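/- arXiv:1401.4965 — 7 statements merged into one kernel-verified Lean document; each statement's English description precedes it below -/
import Mathlib

section
/- A strong product of digraphs G = G₁ ⊠ G₂ is thin if and only if both G₁ and G₂ are thin. -/
/-- Closed out-neighborhood `N⁺[v] = {v} ∪ {x : vx ∈ E}`. -/
def Nout {V : Type*} (E : V → V → Prop) (v : V) : Set V := insert v {x | E v x}

/-- Closed in-neighborhood `N⁻[v] = {v} ∪ {x : xv ∈ E}`. -/
def Nin {V : Type*} (E : V → V → Prop) (v : V) : Set V := insert v {x | E x v}

/-- A digraph is thin if distinct vertices have distinct closed out-neighborhoods or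
distinct closed in-neighborhoods. -/
def Thin {V : Type*} (E : V → V → Prop) : Prop :=
  ∀ x y : V, Nout E x = Nout E y → Nin E x = Nin E y → x = y

/-- Arc relation of the strong product of two digraphs. -/
def StrongAdj {V₁ V₂ : Type*} (E₁ : V₁ → V₁ → Prop) (E₂ : V₂ → V₂ → Prop) :
    V₁ × V₂ → V₁ × V₂ → Prop := fun x y =>
  (E₁ x.1 y.1 ∧ x.2 = y.2) ∨ (x.1 = y.1 ∧ E₂ x.2 y.2) ∨ (E₁ x.1 y.1 ∧ E₂ x.2 y.2)

/-- A strong product of digraphs `G = G₁ ⊠ G₂` is thin iff both `G₁` and `G₂` are thin. -/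
theorem strong_thin_iff {V₁ V₂ : Type*} [Nonempty V₁] [Nonempty V₂]
    (E₁ : V₁ → V₁ → Prop) (E₂ : V₂ → V₂ → Prop)
    (hirr₁ : Irreflexive E₁) (hirr₂ : Irreflexive E₂) :
    Thin (StrongAdj E₁ E₂) ↔ Thin E₁ ∧ Thin E₂ := by
  have hout : ∀ p : V₁ × V₂,
      Nout (StrongAdj E₁ E₂) p = (Nout E₁ p.1) ×ˢ (Nout E₂ p.2) := by
    rintro ⟨a, b⟩
    ext ⟨x, y⟩
    simp only [Nout, StrongAdj, Set.mem_insert_iff, Set.mem_setOf_eq, Set.mem_prod,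
      Prod.ext_iff]
    tauto
  have hin : ∀ p : V₁ × V₂,
      Nin (StrongAdj E₁ E₂) p = (Nin E₁ p.1) ×ˢ (Nin E₂ p.2) := by
    rintro ⟨a, b⟩
    ext ⟨x, y⟩
    simp only [Nin, StrongAdj, Set.mem_insert_iff, Set.mem_setOf_eq, Set.mem_prod,
      Prod.ext_iff]
    tauto
  constructor
  · intro h
    constructor
    · intro x y hNo hNi
      obtain ⟨b⟩ := ‹Nonempty V₂›
      have := h (x, b) (y, b) (by rw [hout, hout, hNo]) (by rw [hin, hin, hNi])
      exact congrArg Prod.fst this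
    · intro x y hNo hNi
      obtain ⟨a⟩ := ‹Nonempty V₁›
      have := h (a, x) (a, y) (by rw [hout, hout, hNo]) (by rw [hin, hin, hNi])
      exact congrArg Prod.snd this
  · rintro ⟨h₁, h₂⟩ ⟨x₁, x₂⟩ ⟨y₁, y₂⟩ hNo hNi
    rw [hout, hout] at hNo
    rw [hin, hin] at hNi
    have hne₁ : (Nout E₁ x₁).Nonempty := ⟨x₁, Set.mem_insert _ _⟩
    have hne₂ : (Nout E₂ x₂).Nonempty := ⟨x₂, Set.mem_insert _ _⟩
    have hne₁' : (Nin E₁ x₁).Nonempty := ⟨x₁, Set.mem_insert _ _⟩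
    have hne₂' : (Nin E₂ x₂).Nonempty := ⟨x₂, Set.mem_insert _ _⟩
    rw [Set.prod_eq_prod_iff_of_nonempty (hne₁.prod hne₂)] at hNo
    rw [Set.prod_eq_prod_iff_of_nonempty (hne₁'.prod hne₂')] at hNi
    exact Prod.ext (h₁ x₁ y₁ hNo.1 hNi.1) (h₂ x₂ y₂ hNo.2 hNi.2)
end

section
/- For digraphs G₁ and G₂ and any vertex (x₁,x₂) of G₁ ⊠ G₂, the S-equivalence class of (x₁,x₂) in G₁ ⊠ G₂ equals the Cartesian product of classes S_{G₁}(x₁) × S_{G₂}(x₂). -/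
/-- The S-equivalence class of a vertex `v`: all vertices with the same closed
out-neighborhood and the same closed in-neighborhood as `v`. -/
def Sclass {V : Type*} (E : V → V → Prop) (v : V) : Set V :=
  {u | Nout E u = Nout E v ∧ Nin E u = Nin E v}

lemma Nout_strong {V₁ V₂ : Type*} (E₁ : V₁ → V₁ → Prop) (E₂ : V₂ → V₂ → Prop)
    (u : V₁ × V₂) : Nout (StrongAdj E₁ E₂) u = Nout E₁ u.1 ×ˢ Nout E₂ u.2 := by
  ext ⟨a, b⟩
  simp only [Nout, StrongAdj, Set.mem_insert_iff, Set.mem_setOf_eq, Set.mem_prod,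
    Prod.ext_iff]
  tauto

lemma Nin_strong {V₁ V₂ : Type*} (E₁ : V₁ → V₁ → Prop) (E₂ : V₂ → V₂ → Prop)
    (u : V₁ × V₂) : Nin (StrongAdj E₁ E₂) u = Nin E₁ u.1 ×ˢ Nin E₂ u.2 := by
  ext ⟨a, b⟩
  simp only [Nin, StrongAdj, Set.mem_insert_iff, Set.mem_setOf_eq, Set.mem_prod,
    Prod.ext_iff]
  tauto

/-- The S-class of `(x₁,x₂)` in `G₁ ⊠ G₂` is the product of the S-classes
`S_{G₁}(x₁) × S_{G₂}(x₂)`. -/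
theorem strong_Sclass_prod {V₁ V₂ : Type*}
    (E₁ : V₁ → V₁ → Prop) (E₂ : V₂ → V₂ → Prop)
    (hirr₁ : Irreflexive E₁) (hirr₂ : Irreflexive E₂) (x₁ : V₁) (x₂ : V₂) :
    Sclass (StrongAdj E₁ E₂) (x₁, x₂) = Sclass E₁ x₁ ×ˢ Sclass E₂ x₂ := by
  ext ⟨u₁, u₂⟩
  simp only [Sclass, Set.mem_setOf_eq, Set.mem_prod, Nout_strong, Nin_strong]
  rw [Set.prod_eq_prod_iff_of_nonempty (s := Nout E₁ u₁) (t := Nout E₂ u₂)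
      ⟨(u₁, u₂), Or.inl rfl, Or.inl rfl⟩,
    Set.prod_eq_prod_iff_of_nonempty (s := Nin E₁ u₁) (t := Nin E₂ u₂)
      ⟨(u₁, u₂), Or.inl rfl, Or.inl rfl⟩]
  tauto
end

section
/- For any digraphs G and H, the quotient of the strong product is isomorphic to the strong product of the quotients: (G ⊠ H)/S ≅ (G/S) ⊠ (H/S). -/
/-- The setoid given by the relation S: `x S y` iff `N⁺[x] = N⁺[y]` and `N⁻[x] = N⁻[y]`. -/
def Ssetoid {V : Type*} (E : V → V → Prop) : Setoid V where
  r x y := Nout E x = Nout E y ∧ Nin E x = Nin E y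
  iseqv := ⟨fun _ => ⟨rfl, rfl⟩, fun h => ⟨h.1.symm, h.2.symm⟩,
    fun h h' => ⟨h.1.trans h'.1, h.2.trans h'.2⟩⟩

/-- Arc relation of the quotient digraph `G/S`: `ab` is an arc iff `a ≠ b` and
`xy ∈ E(G)` for some `x ∈ a`, `y ∈ b`. -/
def QuotAdj {V : Type*} (E : V → V → Prop) :
    Quotient (Ssetoid E) → Quotient (Ssetoid E) → Prop := fun a b =>
  a ≠ b ∧ ∃ x y : V, Quotient.mk (Ssetoid E) x = a ∧ Quotient.mk (Ssetoid E) y = b ∧ E x y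

lemma self_mem_Nout {V : Type*} (E : V → V → Prop) (v : V) : v ∈ Nout E v :=
  Set.mem_insert _ _

lemma self_mem_Nin {V : Type*} (E : V → V → Prop) (v : V) : v ∈ Nin E v :=
  Set.mem_insert _ _

lemma nout_strong {V₁ V₂ : Type*} (E₁ : V₁ → V₁ → Prop) (E₂ : V₂ → V₂ → Prop)
    (x : V₁ × V₂) : Nout (StrongAdj E₁ E₂) x = Nout E₁ x.1 ×ˢ Nout E₂ x.2 := by
  ext y
  simp only [Nout, StrongAdj, Set.mem_insert_iff, Set.mem_setOf_eq, Set.mem_prod]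
  constructor
  · rintro (rfl | (⟨h1, h2⟩ | ⟨h1, h2⟩ | ⟨h1, h2⟩))
    · exact ⟨Or.inl rfl, Or.inl rfl⟩
    · exact ⟨Or.inr h1, Or.inl h2.symm⟩
    · exact ⟨Or.inl h1.symm, Or.inr h2⟩
    · exact ⟨Or.inr h1, Or.inr h2⟩
  · rintro ⟨h1 | h1, h2 | h2⟩
    · exact Or.inl (Prod.ext h1 h2)
    · exact Or.inr (Or.inr (Or.inl ⟨h1.symm, h2⟩))
    · exact Or.inr (Or.inl ⟨h1, h2.symm⟩)
    · exact Or.inr (Or.inr (Or.inr ⟨h1, h2⟩))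

lemma nin_strong {V₁ V₂ : Type*} (E₁ : V₁ → V₁ → Prop) (E₂ : V₂ → V₂ → Prop)
    (x : V₁ × V₂) : Nin (StrongAdj E₁ E₂) x = Nin E₁ x.1 ×ˢ Nin E₂ x.2 := by
  ext y
  simp only [Nin, StrongAdj, Set.mem_insert_iff, Set.mem_setOf_eq, Set.mem_prod]
  constructor
  · rintro (rfl | (⟨h1, h2⟩ | ⟨h1, h2⟩ | ⟨h1, h2⟩))
    · exact ⟨Or.inl rfl, Or.inl rfl⟩
    · exact ⟨Or.inr h1, Or.inl h2⟩
    · exact ⟨Or.inl h1, Or.inr h2⟩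
    · exact ⟨Or.inr h1, Or.inr h2⟩
  · rintro ⟨h1 | h1, h2 | h2⟩
    · exact Or.inl (Prod.ext h1 h2)
    · exact Or.inr (Or.inr (Or.inl ⟨h1, h2⟩))
    · exact Or.inr (Or.inl ⟨h1, h2⟩)
    · exact Or.inr (Or.inr (Or.inr ⟨h1, h2⟩))

lemma S_prod {V₁ V₂ : Type*} (E₁ : V₁ → V₁ → Prop) (E₂ : V₂ → V₂ → Prop)
    (x y : V₁ × V₂) :
    (Ssetoid (StrongAdj E₁ E₂)).r x y ↔
      (Ssetoid E₁).r x.1 y.1 ∧ (Ssetoid E₂).r x.2 y.2 := by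
  show (_ = _ ∧ _ = _) ↔ ((_ = _ ∧ _ = _) ∧ (_ = _ ∧ _ = _))
  rw [nout_strong, nout_strong, nin_strong, nin_strong,
    Set.prod_eq_prod_iff_of_nonempty ⟨x, self_mem_Nout E₁ x.1, self_mem_Nout E₂ x.2⟩,
    Set.prod_eq_prod_iff_of_nonempty ⟨x, self_mem_Nin E₁ x.1, self_mem_Nin E₂ x.2⟩]
  tauto

lemma Smk_prod {V₁ V₂ : Type*} (E₁ : V₁ → V₁ → Prop) (E₂ : V₂ → V₂ → Prop)
    (x y : V₁ × V₂) :
    Quotient.mk (Ssetoid (StrongAdj E₁ E₂)) x = Quotient.mk _ y ↔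
      Quotient.mk (Ssetoid E₁) x.1 = Quotient.mk _ y.1 ∧
      Quotient.mk (Ssetoid E₂) x.2 = Quotient.mk _ y.2 := by
  rw [Quotient.eq, Quotient.eq, Quotient.eq]
  exact S_prod E₁ E₂ x y

/-- For any digraphs `G` and `H`, `(G ⊠ H)/S ≅ (G/S) ⊠ (H/S)`. -/
theorem quotient_strong_iso {V₁ V₂ : Type*}
    (E₁ : V₁ → V₁ → Prop) (E₂ : V₂ → V₂ → Prop)
    (hirr₁ : Irreflexive E₁) (hirr₂ : Irreflexive E₂) :
    ∃ φ : Quotient (Ssetoid (StrongAdj E₁ E₂)) ≃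
        Quotient (Ssetoid E₁) × Quotient (Ssetoid E₂),
      ∀ a b, QuotAdj (StrongAdj E₁ E₂) a b ↔
        StrongAdj (QuotAdj E₁) (QuotAdj E₂) (φ a) (φ b) := by
  refine ⟨{
    toFun := Quotient.lift
      (fun p => (Quotient.mk (Ssetoid E₁) p.1, Quotient.mk (Ssetoid E₂) p.2))
      (fun p q h => by
        obtain ⟨h1, h2⟩ := (S_prod E₁ E₂ p q).mp h
        exact Prod.ext (Quotient.sound h1) (Quotient.sound h2))
    invFun := fun ab => Quotient.lift₂
      (fun x y => Quotient.mk (Ssetoid (StrongAdj E₁ E₂)) (x, y))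
      (fun x y x' y' hx hy =>
        Quotient.sound ((S_prod E₁ E₂ (x, y) (x', y')).mpr ⟨hx, hy⟩)) ab.1 ab.2
    left_inv := fun a => by induction a using Quotient.ind; rfl
    right_inv := fun ab => by
      obtain ⟨a, b⟩ := ab
      induction a using Quotient.ind
      induction b using Quotient.ind
      rfl }, ?_⟩
  intro a b
  induction a using Quotient.ind with | _ p => ?_
  induction b using Quotient.ind with | _ q => ?_
  simp only [Equiv.coe_fn_mk, Quotient.lift_mk]
  constructor
  · rintro ⟨hne, x, y, hx, hy, hxy⟩
    obtain ⟨hx1, hx2⟩ := (Smk_prod E₁ E₂ x p).mp hx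
    obtain ⟨hy1, hy2⟩ := (Smk_prod E₁ E₂ y q).mp hy
    have hne' : Quotient.mk (Ssetoid (StrongAdj E₁ E₂)) x ≠ Quotient.mk _ y := by
      rw [hx, hy]; exact hne
    rcases hxy with ⟨e1, e2⟩ | ⟨e1, e2⟩ | ⟨e1, e2⟩
    · have hc2 : Quotient.mk (Ssetoid E₂) x.2 = Quotient.mk _ y.2 := by rw [e2]
      have hc1 : Quotient.mk (Ssetoid E₁) x.1 ≠ Quotient.mk _ y.1 :=
        fun h => hne' ((Smk_prod E₁ E₂ x y).mpr ⟨h, hc2⟩)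
      exact Or.inl ⟨⟨fun h => hc1 (hx1.trans (h.trans hy1.symm)),
        x.1, y.1, hx1, hy1, e1⟩, hx2.symm.trans (hc2.trans hy2)⟩
    · have hc1 : Quotient.mk (Ssetoid E₁) x.1 = Quotient.mk _ y.1 := by rw [e1]
      have hc2 : Quotient.mk (Ssetoid E₂) x.2 ≠ Quotient.mk _ y.2 :=
        fun h => hne' ((Smk_prod E₁ E₂ x y).mpr ⟨hc1, h⟩)
      exact Or.inr (Or.inl ⟨hx1.symm.trans (hc1.trans hy1),
        ⟨fun h => hc2 (hx2.trans (h.trans hy2.symm)), x.2, y.2, hx2, hy2, e2⟩⟩)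
    · by_cases h1 : Quotient.mk (Ssetoid E₁) x.1 = Quotient.mk _ y.1
      · have hc2 : Quotient.mk (Ssetoid E₂) x.2 ≠ Quotient.mk _ y.2 :=
          fun h => hne' ((Smk_prod E₁ E₂ x y).mpr ⟨h1, h⟩)
        exact Or.inr (Or.inl ⟨hx1.symm.trans (h1.trans hy1),
          ⟨fun h => hc2 (hx2.trans (h.trans hy2.symm)), x.2, y.2, hx2, hy2, e2⟩⟩)
      · by_cases h2 : Quotient.mk (Ssetoid E₂) x.2 = Quotient.mk _ y.2
        · exact Or.inl ⟨⟨fun h => h1 (hx1.trans (h.trans hy1.symm)),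
            x.1, y.1, hx1, hy1, e1⟩, hx2.symm.trans (h2.trans hy2)⟩
        · exact Or.inr (Or.inr
            ⟨⟨fun h => h1 (hx1.trans (h.trans hy1.symm)), x.1, y.1, hx1, hy1, e1⟩,
             ⟨fun h => h2 (hx2.trans (h.trans hy2.symm)), x.2, y.2, hx2, hy2, e2⟩⟩)
  · rintro (⟨⟨hne1, x1, y1, hx1, hy1, e1⟩, heq2⟩ |
      ⟨heq1, ⟨hne2, x2, y2, hx2, hy2, e2⟩⟩ |
      ⟨⟨hne1, x1, y1, hx1, hy1, e1⟩, ⟨hne2, x2, y2, hx2, hy2, e2⟩⟩)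
    · refine ⟨fun h => hne1 ((Smk_prod E₁ E₂ p q).mp h).1,
        (x1, p.2), (y1, p.2), ?_, ?_, Or.inl ⟨e1, rfl⟩⟩
      · exact (Smk_prod E₁ E₂ (x1, p.2) p).mpr ⟨hx1, rfl⟩
      · exact (Smk_prod E₁ E₂ (y1, p.2) q).mpr ⟨hy1, heq2⟩
    · refine ⟨fun h => hne2 ((Smk_prod E₁ E₂ p q).mp h).2,
        (p.1, x2), (p.1, y2), ?_, ?_, Or.inr (Or.inl ⟨rfl, e2⟩)⟩
      · exact (Smk_prod E₁ E₂ (p.1, x2) p).mpr ⟨rfl, hx2⟩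
      · exact (Smk_prod E₁ E₂ (p.1, y2) q).mpr ⟨heq1, hy2⟩
    · refine ⟨fun h => hne1 ((Smk_prod E₁ E₂ p q).mp h).1,
        (x1, x2), (y1, y2), ?_, ?_, Or.inr (Or.inr ⟨e1, e2⟩)⟩
      · exact (Smk_prod E₁ E₂ (x1, x2) p).mpr ⟨hx1, hx2⟩
      · exact (Smk_prod E₁ E₂ (y1, y2) q).mpr ⟨hy1, hy2⟩
end

section
/- Let G = H ⊠ K be a thin strong product of digraphs. Then every non-Cartesian arc of G (i.e., every arc (h,k)(h',k') with h ≠ h' and k ≠ k') is dispensable; consequently, every arc of the Cartesian skeleton 𝕊(G) is Cartesian with respect to this factorization. -/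
/-- Condition (3) for a family of closed neighborhoods `N`:
`N[x] ∩ N[y] ⊊ N[x] ∩ N[z]` and `N[x] ∩ N[y] ⊊ N[y] ∩ N[z]`. -/
def NCond3 {V : Type*} (N : V → Set V) (x y z : V) : Prop :=
  N x ∩ N y ⊂ N x ∩ N z ∧ N x ∩ N y ⊂ N y ∩ N z

/-- The N-condition for a family of closed neighborhoods `N`: one of
(1) `N[x] ⊊ N[z] ⊊ N[y]`, (2) `N[y] ⊊ N[z] ⊊ N[x]`, or (3) `NCond3`. -/
def NCond {V : Type*} (N : V → Set V) (x y z : V) : Prop :=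
  (N x ⊂ N z ∧ N z ⊂ N y) ∨ (N y ⊂ N z ∧ N z ⊂ N x) ∨ NCond3 N x y z

/-- The weak N-condition: `N[x] ∩ N[y] ⊆ N[x] ∩ N[z]` and `N[x] ∩ N[y] ⊆ N[y] ∩ N[z]`. -/
def WeakNCond {V : Type*} (N : V → Set V) (x y z : V) : Prop :=
  N x ∩ N y ⊆ N x ∩ N z ∧ N x ∩ N y ⊆ N y ∩ N z

/-- Dispensability condition (D1): some `z` satisfies both the `N⁺`- and the
`N⁻`-condition with `xy`. -/
def D1 {V : Type*} (E : V → V → Prop) (x y : V) : Prop :=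
  ∃ z : V, NCond (Nout E) x y z ∧ NCond (Nin E) x y z

/-- Dispensability condition (D2). -/
def D2 {V : Type*} (E : V → V → Prop) (x y : V) : Prop :=
  ∃ z₁ z₂ : V, (NCond3 (Nout E) x y z₁ ∧ WeakNCond (Nin E) x y z₁) ∧
    (NCond3 (Nin E) x y z₂ ∧ WeakNCond (Nout E) x y z₂)

/-- Dispensability condition (D3). -/
def D3 {V : Type*} (E : V → V → Prop) (x y : V) : Prop :=
  ∃ z : V, NCond (Nout E) x y z ∧ (Nin E x = Nin E z ∨ Nin E y = Nin E z)

/-- Dispensability condition (D4). -/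
def D4 {V : Type*} (E : V → V → Prop) (x y : V) : Prop :=
  ∃ z : V, NCond (Nin E) x y z ∧ (Nout E x = Nout E z ∨ Nout E y = Nout E z)

/-- Dispensability condition (D5). -/
def D5 {V : Type*} (E : V → V → Prop) (x y : V) : Prop :=
  ∃ z₁ z₂ : V, z₁ ≠ z₂ ∧ z₁ ≠ x ∧ z₁ ≠ y ∧ z₂ ≠ x ∧ z₂ ≠ y ∧
    Nout E x = Nout E z₁ ∧ Nin E x = Nin E z₂ ∧ Nin E z₁ = Nin E y ∧ Nout E z₂ = Nout E y

/-- An arc `xy` is dispensable if one of (D1)–(D5) holds. -/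
def Dispensable {V : Type*} (E : V → V → Prop) (x y : V) : Prop :=
  D1 E x y ∨ D2 E x y ∨ D3 E x y ∨ D4 E x y ∨ D5 E x y

/-- Arc relation of the Cartesian skeleton `𝕊(G)`: the non-dispensable arcs of `G`. -/
def SkelAdj {V : Type*} (E : V → V → Prop) (x y : V) : Prop :=
  E x y ∧ ¬ Dispensable E x y

/-- Arc relation of the Cartesian product of two digraphs. -/
def CartAdj {V₁ V₂ : Type*} (E₁ : V₁ → V₁ → Prop) (E₂ : V₂ → V₂ → Prop) :
    V₁ × V₂ → V₁ × V₂ → Prop := fun x y =>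
  (E₁ x.1 y.1 ∧ x.2 = y.2) ∨ (x.1 = y.1 ∧ E₂ x.2 y.2)

lemma prod_ssubset_helper {α β : Type*} {s s' : Set α} {t t' : Set β}
    (hss : s ⊆ s') (htt : t ⊆ t') {a : α} {b : β}
    (ha : a ∈ s') (hb : b ∈ t') (hn : a ∉ s ∨ b ∉ t) :
    s ×ˢ t ⊂ s' ×ˢ t' := by
  refine (Set.ssubset_iff_of_subset (Set.prod_mono hss htt)).2 ⟨(a,b), ⟨ha, hb⟩, fun hm => ?_⟩
  rcases hn with hn | hn
  · exact hn hm.1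
  · exact hn hm.2

/-- In a thin strong product `G = H ⊠ K`, every non-Cartesian arc (both coordinates of
the endpoints differ) is dispensable; consequently every arc of the Cartesian skeleton
`𝕊(G)` is Cartesian w.r.t. this factorization. -/
theorem nonCartesian_dispensable {V₁ V₂ : Type*}
    (E₁ : V₁ → V₁ → Prop) (E₂ : V₂ → V₂ → Prop)
    (hirr₁ : Irreflexive E₁) (hirr₂ : Irreflexive E₂)
    (hthin : Thin (StrongAdj E₁ E₂)) :
    (∀ x y : V₁ × V₂, StrongAdj E₁ E₂ x y → x.1 ≠ y.1 → x.2 ≠ y.2 →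
      Dispensable (StrongAdj E₁ E₂) x y) ∧
    (∀ x y : V₁ × V₂, SkelAdj (StrongAdj E₁ E₂) x y → x.1 = y.1 ∨ x.2 = y.2) := by
  have key : ∀ x y : V₁ × V₂, StrongAdj E₁ E₂ x y → x.1 ≠ y.1 → x.2 ≠ y.2 →
      Dispensable (StrongAdj E₁ E₂) x y := by
    rintro ⟨h, k⟩ ⟨h', k'⟩ hadj hne1 hne2
    replace hne1 : h ≠ h' := hne1
    replace hne2 : k ≠ k' := hne2
    obtain ⟨e1, e2⟩ : E₁ h h' ∧ E₂ k k' := by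
      rcases hadj with ⟨_, h2⟩ | ⟨h1, _⟩ | h12
      · exact absurd h2 hne2
      · exact absurd h1 hne1
      · exact h12
    set E := StrongAdj E₁ E₂ with hEdef
    have hout : ∀ p : V₁ × V₂, Nout E p = Nout E₁ p.1 ×ˢ Nout E₂ p.2 := by
      rintro ⟨a, b⟩
      ext ⟨u, v⟩
      simp only [Nout, hEdef, StrongAdj, Set.mem_insert_iff, Set.mem_setOf_eq, Set.mem_prod,
        Prod.mk.injEq]
      tauto
    have hin : ∀ p : V₁ × V₂, Nin E p = Nin E₁ p.1 ×ˢ Nin E₂ p.2 := by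
      rintro ⟨a, b⟩
      ext ⟨u, v⟩
      simp only [Nin, hEdef, StrongAdj, Set.mem_insert_iff, Set.mem_setOf_eq, Set.mem_prod,
        Prod.mk.injEq]
      tauto
    set A := Nout E₁ h with hAdef
    set A' := Nout E₁ h' with hA'def
    set B := Nout E₂ k with hBdef
    set B' := Nout E₂ k' with hB'def
    set C := Nin E₁ h with hCdef
    set C' := Nin E₁ h' with hC'def
    set D := Nin E₂ k with hDdef
    set D' := Nin E₂ k' with hD'def
    have ox : Nout E (h, k) = A ×ˢ B := hout (h, k)
    have oy : Nout E (h', k') = A' ×ˢ B' := hout (h', k')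
    have oz1 : Nout E (h', k) = A' ×ˢ B := hout (h', k)
    have oz2 : Nout E (h, k') = A ×ˢ B' := hout (h, k')
    have ix : Nin E (h, k) = C ×ˢ D := hin (h, k)
    have iy : Nin E (h', k') = C' ×ˢ D' := hin (h', k')
    have iz1 : Nin E (h', k) = C' ×ˢ D := hin (h', k)
    have iz2 : Nin E (h, k') = C ×ˢ D' := hin (h, k')
    -- memberships
    have mhA : h ∈ A := Set.mem_insert _ _
    have mh'A : h' ∈ A := Set.mem_insert_of_mem _ e1
    have mh'A' : h' ∈ A' := Set.mem_insert _ _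
    have mkB : k ∈ B := Set.mem_insert _ _
    have mk'B : k' ∈ B := Set.mem_insert_of_mem _ e2
    have mk'B' : k' ∈ B' := Set.mem_insert _ _
    have mhC : h ∈ C := Set.mem_insert _ _
    have mhC' : h ∈ C' := Set.mem_insert_of_mem _ e1
    have mh'C' : h' ∈ C' := Set.mem_insert _ _
    have mkD : k ∈ D := Set.mem_insert _ _
    have mkD' : k ∈ D' := Set.mem_insert_of_mem _ e2
    have mk'D' : k' ∈ D' := Set.mem_insert _ _
    -- weak conditions (always hold)
    have wkO1 : WeakNCond (Nout E) (h, k) (h', k') (h', k) := by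
      constructor
      · rw [ox, oy, oz1]; rintro p ⟨p1, p2⟩; exact ⟨p1, p2.1, p1.2⟩
      · rw [ox, oy, oz1]; rintro p ⟨p1, p2⟩; exact ⟨p2, p2.1, p1.2⟩
    have wkO2 : WeakNCond (Nout E) (h, k) (h', k') (h, k') := by
      constructor
      · rw [ox, oy, oz2]; rintro p ⟨p1, p2⟩; exact ⟨p1, p1.1, p2.2⟩
      · rw [ox, oy, oz2]; rintro p ⟨p1, p2⟩; exact ⟨p2, p1.1, p2.2⟩
    have wkI1 : WeakNCond (Nin E) (h, k) (h', k') (h', k) := by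
      constructor
      · rw [ix, iy, iz1]; rintro p ⟨p1, p2⟩; exact ⟨p1, p2.1, p1.2⟩
      · rw [ix, iy, iz1]; rintro p ⟨p1, p2⟩; exact ⟨p2, p2.1, p1.2⟩
    have wkI2 : WeakNCond (Nin E) (h, k) (h', k') (h, k') := by
      constructor
      · rw [ix, iy, iz2]; rintro p ⟨p1, p2⟩; exact ⟨p1, p1.1, p2.2⟩
      · rw [ix, iy, iz2]; rintro p ⟨p1, p2⟩; exact ⟨p2, p1.1, p2.2⟩
    -- (3)-condition constructors
    have c3o1 : ¬ B ⊆ B' → ¬ A' ⊆ A → NCond3 (Nout E) (h, k) (h', k') (h', k) := by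
      intro hb ha
      obtain ⟨b, hbB, hbB'⟩ := Set.not_subset.1 hb
      obtain ⟨a, haA', haA⟩ := Set.not_subset.1 ha
      constructor
      · rw [ox, oy, oz1, Set.prod_inter_prod, Set.prod_inter_prod]
        exact prod_ssubset_helper Set.Subset.rfl (fun x hx => ⟨hx.1, hx.1⟩)
          (⟨mh'A, mh'A'⟩ : h' ∈ A ∩ A') (⟨hbB, hbB⟩ : b ∈ B ∩ B)
          (Or.inr fun hm => hbB' hm.2)
      · rw [ox, oy, oz1, Set.prod_inter_prod, Set.prod_inter_prod]
        exact prod_ssubset_helper (fun x hx => ⟨hx.2, hx.2⟩) (fun x hx => ⟨hx.2, hx.1⟩)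
          (⟨haA', haA'⟩ : a ∈ A' ∩ A') (⟨mk'B', mk'B⟩ : k' ∈ B' ∩ B)
          (Or.inl fun hm => haA hm.1)
    have c3o2 : ¬ A ⊆ A' → ¬ B' ⊆ B → NCond3 (Nout E) (h, k) (h', k') (h, k') := by
      intro ha hb
      obtain ⟨a, haA, haA'⟩ := Set.not_subset.1 ha
      obtain ⟨b, hbB', hbB⟩ := Set.not_subset.1 hb
      constructor
      · rw [ox, oy, oz2, Set.prod_inter_prod, Set.prod_inter_prod]
        exact prod_ssubset_helper (fun x hx => ⟨hx.1, hx.1⟩) Set.Subset.rfl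
          (⟨haA, haA⟩ : a ∈ A ∩ A) (⟨mk'B, mk'B'⟩ : k' ∈ B ∩ B')
          (Or.inl fun hm => haA' hm.2)
      · rw [ox, oy, oz2, Set.prod_inter_prod, Set.prod_inter_prod]
        exact prod_ssubset_helper (fun x hx => ⟨hx.2, hx.1⟩) (fun x hx => ⟨hx.2, hx.2⟩)
          (⟨mh'A', mh'A⟩ : h' ∈ A' ∩ A) (⟨hbB', hbB'⟩ : b ∈ B' ∩ B')
          (Or.inr fun hm => hbB hm.1)
    have c3i1 : ¬ D ⊆ D' → ¬ C' ⊆ C → NCond3 (Nin E) (h, k) (h', k') (h', k) := by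
      intro hd hc
      obtain ⟨d, hdD, hdD'⟩ := Set.not_subset.1 hd
      obtain ⟨c, hcC', hcC⟩ := Set.not_subset.1 hc
      constructor
      · rw [ix, iy, iz1, Set.prod_inter_prod, Set.prod_inter_prod]
        exact prod_ssubset_helper Set.Subset.rfl (fun x hx => ⟨hx.1, hx.1⟩)
          (⟨mhC, mhC'⟩ : h ∈ C ∩ C') (⟨hdD, hdD⟩ : d ∈ D ∩ D)
          (Or.inr fun hm => hdD' hm.2)
      · rw [ix, iy, iz1, Set.prod_inter_prod, Set.prod_inter_prod]
        exact prod_ssubset_helper (fun x hx => ⟨hx.2, hx.2⟩) (fun x hx => ⟨hx.2, hx.1⟩)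
          (⟨hcC', hcC'⟩ : c ∈ C' ∩ C') (⟨mkD', mkD⟩ : k ∈ D' ∩ D)
          (Or.inl fun hm => hcC hm.1)
    have c3i2 : ¬ C ⊆ C' → ¬ D' ⊆ D → NCond3 (Nin E) (h, k) (h', k') (h, k') := by
      intro hc hd
      obtain ⟨c, hcC, hcC'⟩ := Set.not_subset.1 hc
      obtain ⟨d, hdD', hdD⟩ := Set.not_subset.1 hd
      constructor
      · rw [ix, iy, iz2, Set.prod_inter_prod, Set.prod_inter_prod]
        exact prod_ssubset_helper (fun x hx => ⟨hx.1, hx.1⟩) Set.Subset.rfl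
          (⟨hcC, hcC⟩ : c ∈ C ∩ C) (⟨mkD, mkD'⟩ : k ∈ D ∩ D')
          (Or.inl fun hm => hcC' hm.2)
      · rw [ix, iy, iz2, Set.prod_inter_prod, Set.prod_inter_prod]
        exact prod_ssubset_helper (fun x hx => ⟨hx.2, hx.1⟩) (fun x hx => ⟨hx.2, hx.2⟩)
          (⟨mhC', mhC⟩ : h ∈ C' ∩ C) (⟨hdD', hdD'⟩ : d ∈ D' ∩ D')
          (Or.inr fun hm => hdD hm.1)
    -- clause (1)/(2) constructors
    have c1o : A ⊂ A' → B ⊂ B' →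
        NCond (Nout E) (h, k) (h', k') (h', k) ∧ NCond (Nout E) (h, k) (h', k') (h, k') := by
      intro hA hB
      obtain ⟨a, haA', haA⟩ := Set.exists_of_ssubset hA
      obtain ⟨b, hbB', hbB⟩ := Set.exists_of_ssubset hB
      constructor
      · refine Or.inl ⟨?_, ?_⟩
        · rw [ox, oz1]; exact prod_ssubset_helper hA.1 Set.Subset.rfl haA' mkB (Or.inl haA)
        · rw [oz1, oy]; exact prod_ssubset_helper Set.Subset.rfl hB.1 mh'A' hbB' (Or.inr hbB)
      · refine Or.inl ⟨?_, ?_⟩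
        · rw [ox, oz2]; exact prod_ssubset_helper Set.Subset.rfl hB.1 mhA hbB' (Or.inr hbB)
        · rw [oz2, oy]; exact prod_ssubset_helper hA.1 Set.Subset.rfl haA' mk'B' (Or.inl haA)
    have c2o : A' ⊂ A → B' ⊂ B →
        NCond (Nout E) (h, k) (h', k') (h', k) ∧ NCond (Nout E) (h, k) (h', k') (h, k') := by
      intro hA hB
      obtain ⟨a, haA, haA'⟩ := Set.exists_of_ssubset hA
      obtain ⟨b, hbB, hbB'⟩ := Set.exists_of_ssubset hB
      constructor
      · refine Or.inr (Or.inl ⟨?_, ?_⟩)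
        · rw [oy, oz1]; exact prod_ssubset_helper Set.Subset.rfl hB.1 mh'A' hbB (Or.inr hbB')
        · rw [oz1, ox]; exact prod_ssubset_helper hA.1 Set.Subset.rfl haA mkB (Or.inl haA')
      · refine Or.inr (Or.inl ⟨?_, ?_⟩)
        · rw [oy, oz2]; exact prod_ssubset_helper hA.1 Set.Subset.rfl haA mk'B' (Or.inl haA')
        · rw [oz2, ox]; exact prod_ssubset_helper Set.Subset.rfl hB.1 mhA hbB (Or.inr hbB')
    have c1i : C ⊂ C' → D ⊂ D' →
        NCond (Nin E) (h, k) (h', k') (h', k) ∧ NCond (Nin E) (h, k) (h', k') (h, k') := by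
      intro hC hD
      obtain ⟨c, hcC', hcC⟩ := Set.exists_of_ssubset hC
      obtain ⟨d, hdD', hdD⟩ := Set.exists_of_ssubset hD
      constructor
      · refine Or.inl ⟨?_, ?_⟩
        · rw [ix, iz1]; exact prod_ssubset_helper hC.1 Set.Subset.rfl hcC' mkD (Or.inl hcC)
        · rw [iz1, iy]; exact prod_ssubset_helper Set.Subset.rfl hD.1 mh'C' hdD' (Or.inr hdD)
      · refine Or.inl ⟨?_, ?_⟩
        · rw [ix, iz2]; exact prod_ssubset_helper Set.Subset.rfl hD.1 mhC hdD' (Or.inr hdD)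
        · rw [iz2, iy]; exact prod_ssubset_helper hC.1 Set.Subset.rfl hcC' mk'D' (Or.inl hcC)
    have c2i : C' ⊂ C → D' ⊂ D →
        NCond (Nin E) (h, k) (h', k') (h', k) ∧ NCond (Nin E) (h, k) (h', k') (h, k') := by
      intro hC hD
      obtain ⟨c, hcC, hcC'⟩ := Set.exists_of_ssubset hC
      obtain ⟨d, hdD, hdD'⟩ := Set.exists_of_ssubset hD
      constructor
      · refine Or.inr (Or.inl ⟨?_, ?_⟩)
        · rw [iy, iz1]; exact prod_ssubset_helper Set.Subset.rfl hD.1 mh'C' hdD (Or.inr hdD')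
        · rw [iz1, ix]; exact prod_ssubset_helper hC.1 Set.Subset.rfl hcC mkD (Or.inl hcC')
      · refine Or.inr (Or.inl ⟨?_, ?_⟩)
        · rw [iy, iz2]; exact prod_ssubset_helper hC.1 Set.Subset.rfl hcC mk'D' (Or.inl hcC')
        · rw [iz2, ix]; exact prod_ssubset_helper Set.Subset.rfl hD.1 mhC hdD (Or.inr hdD')
    -- side lemmas
    have outSide : A ≠ A' → B ≠ B' →
        ((NCond3 (Nout E) (h, k) (h', k') (h', k) ∨ NCond3 (Nout E) (h, k) (h', k') (h, k')) ∨
          (NCond (Nout E) (h, k) (h', k') (h', k) ∧ NCond (Nout E) (h, k) (h', k') (h, k'))) := by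
      intro hA hB
      by_cases p : A ⊆ A'
      · by_cases r : B ⊆ B'
        · exact Or.inr (c1o (p.ssubset_of_ne hA) (r.ssubset_of_ne hB))
        · exact Or.inl (Or.inl (c3o1 r (fun q => hA (p.antisymm q))))
      · by_cases s : B' ⊆ B
        · by_cases q : A' ⊆ A
          · exact Or.inr (c2o (q.ssubset_of_ne (Ne.symm hA)) (s.ssubset_of_ne (Ne.symm hB)))
          · exact Or.inl (Or.inl (c3o1 (fun r => hB (r.antisymm s)) q))
        · exact Or.inl (Or.inr (c3o2 p s))
    have inSide : C ≠ C' → D ≠ D' →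
        ((NCond3 (Nin E) (h, k) (h', k') (h', k) ∨ NCond3 (Nin E) (h, k) (h', k') (h, k')) ∨
          (NCond (Nin E) (h, k) (h', k') (h', k) ∧ NCond (Nin E) (h, k) (h', k') (h, k'))) := by
      intro hC hD
      by_cases p : C ⊆ C'
      · by_cases r : D ⊆ D'
        · exact Or.inr (c1i (p.ssubset_of_ne hC) (r.ssubset_of_ne hD))
        · exact Or.inl (Or.inl (c3i1 r (fun q => hC (p.antisymm q))))
      · by_cases s : D' ⊆ D
        · by_cases q : C' ⊆ C
          · exact Or.inr (c2i (q.ssubset_of_ne (Ne.symm hC)) (s.ssubset_of_ne (Ne.symm hD)))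
          · exact Or.inl (Or.inl (c3i1 (fun r => hD (r.antisymm s)) q))
        · exact Or.inl (Or.inr (c3i2 p s))
    -- main case analysis
    by_cases hA : A = A'
    · by_cases hD : D = D'
      · -- D5
        refine Or.inr (Or.inr (Or.inr (Or.inr ⟨(h', k), (h, k'), ?_, ?_, ?_, ?_, ?_, ?_, ?_, ?_, ?_⟩)))
        · exact fun e => hne1 (congrArg Prod.fst e).symm
        · exact fun e => hne1 (congrArg Prod.fst e).symm
        · exact fun e => hne2 (congrArg Prod.snd e)
        · exact fun e => hne2 (congrArg Prod.snd e).symm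
        · exact fun e => hne1 (congrArg Prod.fst e)
        · rw [ox, oz1, hA]
        · rw [ix, iz2, hD]
        · rw [iz1, iy, hD]
        · rw [oz2, oy, hA]
      · -- D4
        have hC : C ≠ C' := by
          intro e
          have : (h, k) = (h', k) := hthin (h, k) (h', k) (by rw [ox, oz1, hA]) (by rw [ix, iz1, e])
          exact hne1 (congrArg Prod.fst this)
        refine Or.inr (Or.inr (Or.inr (Or.inl ?_)))
        rcases inSide hC hD with (c3 | c3) | ⟨n1, _⟩
        · exact ⟨(h', k), Or.inr (Or.inr c3), Or.inl (by rw [ox, oz1, hA])⟩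
        · exact ⟨(h, k'), Or.inr (Or.inr c3), Or.inr (by rw [oy, oz2, hA])⟩
        · exact ⟨(h', k), n1, Or.inl (by rw [ox, oz1, hA])⟩
    · by_cases hB : B = B'
      · by_cases hC : C = C'
        · -- D5 (other diagonal)
          refine Or.inr (Or.inr (Or.inr (Or.inr ⟨(h, k'), (h', k), ?_, ?_, ?_, ?_, ?_, ?_, ?_, ?_, ?_⟩)))
          · exact fun e => hne1 (congrArg Prod.fst e)
          · exact fun e => hne2 (congrArg Prod.snd e).symm
          · exact fun e => hne1 (congrArg Prod.fst e)
          · exact fun e => hne1 (congrArg Prod.fst e).symm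
          · exact fun e => hne2 (congrArg Prod.snd e)
          · rw [ox, oz2, hB]
          · rw [ix, iz1, hC]
          · rw [iz2, iy, hC]
          · rw [oz1, oy, hB]
        · -- D4
          have hD : D ≠ D' := by
            intro e
            have : (h, k) = (h, k') := hthin (h, k) (h, k')
              (by rw [ox, oz2, hB]) (by rw [ix, iz2, e])
            exact hne2 (congrArg Prod.snd this)
          refine Or.inr (Or.inr (Or.inr (Or.inl ?_)))
          rcases inSide hC hD with (c3 | c3) | ⟨n1, _⟩
          · exact ⟨(h', k), Or.inr (Or.inr c3), Or.inr (by rw [oy, oz1, hB])⟩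
          · exact ⟨(h, k'), Or.inr (Or.inr c3), Or.inl (by rw [ox, oz2, hB])⟩
          · exact ⟨(h', k), n1, Or.inr (by rw [oy, oz1, hB])⟩
      · by_cases hC : C = C'
        · -- D3
          refine Or.inr (Or.inr (Or.inl ?_))
          rcases outSide hA hB with (c3 | c3) | ⟨n1, _⟩
          · exact ⟨(h', k), Or.inr (Or.inr c3), Or.inl (by rw [ix, iz1, hC])⟩
          · exact ⟨(h, k'), Or.inr (Or.inr c3), Or.inr (by rw [iy, iz2, hC])⟩
          · exact ⟨(h', k), n1, Or.inl (by rw [ix, iz1, hC])⟩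
        · by_cases hD : D = D'
          · -- D3
            refine Or.inr (Or.inr (Or.inl ?_))
            rcases outSide hA hB with (c3 | c3) | ⟨n1, _⟩
            · exact ⟨(h', k), Or.inr (Or.inr c3), Or.inr (by rw [iy, iz1, hD])⟩
            · exact ⟨(h, k'), Or.inr (Or.inr c3), Or.inl (by rw [ix, iz2, hD])⟩
            · exact ⟨(h', k), n1, Or.inr (by rw [iy, iz1, hD])⟩
          · -- all distinct
            rcases outSide hA hB with o3 | ⟨po1, po2⟩
            · rcases inSide hC hD with i3 | ⟨pi1, pi2⟩
              · -- D2
                refine Or.inr (Or.inl ?_)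
                obtain ⟨u, hu3, hu⟩ : ∃ u, NCond3 (Nout E) (h, k) (h', k') u ∧
                    WeakNCond (Nin E) (h, k) (h', k') u := by
                  rcases o3 with o3 | o3
                  · exact ⟨(h', k), o3, wkI1⟩
                  · exact ⟨(h, k'), o3, wkI2⟩
                obtain ⟨w, hw3, hw⟩ : ∃ w, NCond3 (Nin E) (h, k) (h', k') w ∧
                    WeakNCond (Nout E) (h, k) (h', k') w := by
                  rcases i3 with i3 | i3
                  · exact ⟨(h', k), i3, wkO1⟩
                  · exact ⟨(h, k'), i3, wkO2⟩
                exact ⟨u, w, ⟨hu3, hu⟩, ⟨hw3, hw⟩⟩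
              · -- D1 at the out-witness
                refine Or.inl ?_
                rcases o3 with o3 | o3
                · exact ⟨(h', k), Or.inr (Or.inr o3), pi1⟩
                · exact ⟨(h, k'), Or.inr (Or.inr o3), pi2⟩
            · rcases inSide hC hD with i3 | ⟨pi1, _⟩
              · -- D1 at the in-witness
                refine Or.inl ?_
                rcases i3 with i3 | i3
                · exact ⟨(h', k), po1, Or.inr (Or.inr i3)⟩
                · exact ⟨(h, k'), po2, Or.inr (Or.inr i3)⟩
              · exact Or.inl ⟨(h', k), po1, pi1⟩
  refine ⟨key, ?_⟩
  rintro x y ⟨hE, hnd⟩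
  by_contra hc
  push_neg at hc
  exact hnd (key x y hE hc.1 hc.2)
end

section
/- Let G be a thin connected finite digraph and v a vertex of G. Then any two vertices of S⁺(v) lie in the same connected component of the Cartesian skeleton 𝕊(G); that is, any two vertices x, y ∈ S⁺(v) are joined by a walk in the underlying undirected graph of 𝕊(G). The same holds for any two vertices of S⁻(v). -/
/-!
If `N⁺[x] = N⁺[y]` with `x ≠ y`, then `xy` is an arc. Equal out-neighbourhoods rule out every
`N⁺`-condition, hence (D1)–(D3), and thinness rules out (D5). So either `xy` is an arc of the
skeleton, or (D4) supplies `z` with `N⁺[z] = N⁺[x]` satisfying the `N⁻`-condition with `xy`.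
In the latter case both pairs `(x, z)` and `(z, y)` are strictly smaller than `(x, y)` in the
lexicographic order "larger `N⁻`-intersection first, then smaller `N⁻`-union", which is
well founded on a finite vertex set. The `S⁻` statement is the `S⁺` statement for the
reversed digraph.
-/

open Relation

section NeighborhoodConditions

variable {V : Type*} {N : V → Set V} {x y z : V}

theorem NCond3.symm (h : NCond3 N x y z) : NCond3 N y x z := by
  rw [NCond3, Set.inter_comm (N y)]
  exact ⟨h.2, h.1⟩

theorem NCond.symm (h : NCond N x y z) : NCond N y x z := by
  rcases h with h | h | h
  · exact Or.inr (Or.inl h)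
  · exact Or.inl h
  · exact Or.inr (Or.inr h.symm)

theorem WeakNCond.symm (h : WeakNCond N x y z) : WeakNCond N y x z := by
  rw [WeakNCond, Set.inter_comm (N y)]
  exact ⟨h.2, h.1⟩

theorem not_nCond_of_eq (h : N x = N y) : ¬ NCond N x y z := by
  rintro (⟨hxz, hzy⟩ | ⟨hyz, hzx⟩ | ⟨hxz, -⟩)
  · exact (hxz.trans hzy).ne h
  · exact (hyz.trans hzx).ne h.symm
  · rw [h, Set.inter_self] at hxz
    exact hxz.not_subset Set.inter_subset_left

def pairKey (N : V → Set V) (x y : V) : (Set V)ᵒᵈ ×ₗ Set V :=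
  toLex (OrderDual.toDual (N x ∩ N y), N x ∪ N y)

theorem pairKey_comm (N : V → Set V) (x y : V) : pairKey N x y = pairKey N y x := by
  rw [pairKey, pairKey, Set.inter_comm, Set.union_comm]

theorem NCond.pairKey_lt_left (h : NCond N x y z) : pairKey N x z < pairKey N x y := by
  rw [pairKey, pairKey, Prod.Lex.toLex_lt_toLex]
  rcases h with ⟨hxz, hzy⟩ | ⟨hyz, hzx⟩ | ⟨hxz, -⟩
  · right
    have hxy := (hxz.trans hzy).subset
    refine ⟨?_, ?_⟩
    · simp only [Set.inter_eq_left.mpr hxz.subset, Set.inter_eq_left.mpr hxy]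
    · simpa only [Set.union_eq_right.mpr hxz.subset, Set.union_eq_right.mpr hxy] using hzy
  · left
    simpa only [Set.inter_eq_right.mpr hzx.subset, Set.inter_eq_right.mpr (hyz.trans hzx).subset,
      OrderDual.toDual_lt_toDual] using hyz
  · exact Or.inl hxz

theorem NCond.pairKey_lt_right (h : NCond N x y z) : pairKey N z y < pairKey N x y := by
  simpa only [pairKey_comm N _ y] using h.symm.pairKey_lt_left

end NeighborhoodConditions

section Reversal

variable {V : Type*} {E : V → V → Prop}

theorem nout_flip : Nout (flip E) = Nin E := rfl

theorem nin_flip : Nin (flip E) = Nout E := rfl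

theorem Thin.flip (h : Thin E) : Thin (flip E) :=
  fun x y hout hin => h x y hin hout

theorem Dispensable.flip {x y : V} (h : Dispensable E y x) : Dispensable (flip E) x y := by
  simp only [Dispensable, D1, D2, D3, D4, D5, nout_flip, nin_flip]
  rcases h with ⟨z, hout, hin⟩ | ⟨z₁, z₂, ⟨hout₁, hin₁⟩, hin₂, hout₂⟩ | ⟨z, hout, hin⟩ |
      ⟨z, hin, hout⟩ | ⟨z₁, z₂, hne, hz₁y, hz₁x, hz₂y, hz₂x, e₁, e₂, e₃, e₄⟩
  · exact Or.inl ⟨z, hin.symm, hout.symm⟩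
  · exact Or.inr (Or.inl ⟨z₂, z₁, ⟨hin₂.symm, hout₂.symm⟩, hout₁.symm, hin₁.symm⟩)
  · exact Or.inr (Or.inr (Or.inr (Or.inl ⟨z, hout.symm, hin.symm⟩)))
  · exact Or.inr (Or.inr (Or.inl ⟨z, hin.symm, hout.symm⟩))
  · exact Or.inr (Or.inr (Or.inr (Or.inr
      ⟨z₁, z₂, hne, hz₁x, hz₁y, hz₂x, hz₂y, e₃.symm, e₄.symm, e₁.symm, e₂.symm⟩)))

theorem SkelAdj.of_flip {x y : V} (h : SkelAdj (flip E) x y) : SkelAdj E y x :=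
  ⟨h.1, fun hd => h.2 hd.flip⟩

end Reversal

section Skeleton

variable {V : Type*} {E : V → V → Prop}

theorem exists_nCond_nin_of_dispensable (hthin : Thin E) {x y : V} (hxy : Nout E x = Nout E y)
    (hd : Dispensable E x y) : ∃ z, NCond (Nin E) x y z ∧ Nout E z = Nout E x := by
  rcases hd with ⟨z, h, -⟩ | ⟨z, -, ⟨h, -⟩, -⟩ | ⟨z, h, -⟩ | ⟨z, h, hz | hz⟩ |
      ⟨z, -, -, -, hzy, -, -, hxz, -, hzy', -⟩
  · exact absurd h (not_nCond_of_eq hxy)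
  · exact absurd (Or.inr (Or.inr h)) (not_nCond_of_eq hxy)
  · exact absurd h (not_nCond_of_eq hxy)
  · exact ⟨z, h, hz.symm⟩
  · exact ⟨z, h, (hxy.trans hz).symm⟩
  · exact absurd (hthin z y (hxz.symm.trans hxy) hzy') hzy

theorem reflTransGen_skelAdj_of_nout_eq [Finite V] (hthin : Thin E) {x y : V}
    (hxy : Nout E x = Nout E y) :
    ReflTransGen (fun a b => SkelAdj E a b ∨ SkelAdj E b a) x y := by
  suffices ∀ k x y, pairKey (Nin E) x y = k → Nout E x = Nout E y →
      ReflTransGen (fun a b => SkelAdj E a b ∨ SkelAdj E b a) x y from this _ x y rfl hxy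
  intro k
  induction k using WellFoundedLT.induction with
  | _ k ih =>
    rintro x y rfl hxy
    obtain rfl | hne := eq_or_ne x y
    · exact ReflTransGen.refl
    have hy : y ∈ Nout E x := hxy ▸ Set.mem_insert y _
    have hE : E x y := hy.resolve_left hne.symm
    by_cases hd : Dispensable E x y
    · obtain ⟨z, hz, hzx⟩ := exists_nCond_nin_of_dispensable hthin hxy hd
      exact (ih _ hz.pairKey_lt_left x z rfl hzx.symm).trans
        (ih _ hz.pairKey_lt_right z y rfl (hzx.trans hxy))
    · exact ReflTransGen.single (Or.inl ⟨hE, hd⟩)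

end Skeleton

theorem Sclasses_in_same_skeleton_component_general {V : Type*} [Fintype V]
    (E : V → V → Prop) (hthin : Thin E)
    (v x y : V) :
    (Nout E x = Nout E v → Nout E y = Nout E v →
      Relation.ReflTransGen (fun a b => SkelAdj E a b ∨ SkelAdj E b a) x y) ∧
    (Nin E x = Nin E v → Nin E y = Nin E v →
      Relation.ReflTransGen (fun a b => SkelAdj E a b ∨ SkelAdj E b a) x y) := by
  refine ⟨fun hx hy => reflTransGen_skelAdj_of_nout_eq hthin (hx.trans hy.symm),
    fun hx hy => ?_⟩
  have hflip := reflTransGen_skelAdj_of_nout_eq hthin.flip (E := flip E) (hx.trans hy.symm)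
  refine ReflTransGen.mono ?_ _ _ hflip
  rintro a b (h | h)
  exacts [Or.inr h.of_flip, Or.inl h.of_flip]

/-- In a thin connected finite digraph `G`, any two vertices of `S⁺(v)` are joined by a
walk in the underlying undirected graph of the Cartesian skeleton `𝕊(G)`; the same holds
for `S⁻(v)`. -/
theorem Sclasses_in_same_skeleton_component {V : Type*} [Fintype V]
    (E : V → V → Prop) (hirr : Irreflexive E) (hthin : Thin E)
    (hconn : ∀ x y : V, Relation.ReflTransGen (fun a b => E a b ∨ E b a) x y)
    (v x y : V) :
    (Nout E x = Nout E v → Nout E y = Nout E v →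
      Relation.ReflTransGen (fun a b => SkelAdj E a b ∨ SkelAdj E b a) x y) ∧
    (Nin E x = Nin E v → Nin E y = Nin E v →
      Relation.ReflTransGen (fun a b => SkelAdj E a b ∨ SkelAdj E b a) x y) :=
  Sclasses_in_same_skeleton_component_general E hthin v x y
end

section
/- If G is a thin connected finite digraph, then its Cartesian skeleton 𝕊(G) is connected (i.e., the underlying undirected graph of 𝕊(G), on the full vertex set of G, is connected). -/
/-!
Measure a pair `x, y` lexicographically by the key
`(|(N⁺[x] ∩ N⁺[y])ᶜ| + |(N⁻[x] ∩ N⁻[y])ᶜ|, |N⁺[x] ∪ N⁺[y]| + |N⁻[x] ∪ N⁻[y]|)`.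
For each of (D1)–(D5), the witness `z` of a dispensable arc `xy` is adjacent to both `x` and `y`,
and both pairs `x, z` and `z, y` have a smaller key than `x, y`: their common neighbourhoods grow,
or stay equal while the unions shrink. In case (D5) this is where thinness enters, by excluding
`N⁺[x] = N⁺[y]` and `N⁻[x] = N⁻[y]`. Well-founded induction on the key then joins the ends of
every arc of `G` by a walk in `𝕊(G)`.
-/

open Relation

section

variable {V : Type*} {E : V → V → Prop} {A : V → Set V} {x y z : V}

lemma mem_Nout_self (E : V → V → Prop) (v : V) : v ∈ Nout E v := Set.mem_insert _ _

lemma mem_Nin_self (E : V → V → Prop) (v : V) : v ∈ Nin E v := Set.mem_insert _ _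

lemma mem_Nout_of_adj (h : E x y) : y ∈ Nout E x := Set.mem_insert_of_mem _ h

lemma mem_Nin_of_adj (h : E x y) : x ∈ Nin E y := Set.mem_insert_of_mem _ h

lemma adj_of_mem_Nout (h : y ∈ Nout E x) (hne : y ≠ x) : E x y :=
  (Set.mem_insert_iff.1 h).resolve_left hne

lemma adj_of_mem_Nin (h : x ∈ Nin E y) (hne : x ≠ y) : E x y :=
  (Set.mem_insert_iff.1 h).resolve_left hne

lemma NCond.ne (h : NCond A x y z) : z ≠ x ∧ z ≠ y := by
  rcases h with ⟨h₁, h₂⟩ | ⟨h₁, h₂⟩ | ⟨h₁, h₂⟩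
  · exact ⟨by rintro rfl; exact h₁.ne rfl, by rintro rfl; exact h₂.ne rfl⟩
  · exact ⟨by rintro rfl; exact h₂.ne rfl, by rintro rfl; exact h₁.ne rfl⟩
  · exact ⟨by rintro rfl; exact h₂.ne (Set.inter_comm _ _), by rintro rfl; exact h₁.ne rfl⟩

lemma NCond.symmGen_right (hxy : E x y) (h : NCond (Nout E) x y z) : SymmGen E z y := by
  have hzy := h.ne.2
  rcases h with ⟨-, h₂⟩ | ⟨h₁, -⟩ | ⟨h₁, -⟩
  · exact .of_rel_symm (adj_of_mem_Nout (h₂.subset (mem_Nout_self E z)) hzy)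
  · exact .of_rel (adj_of_mem_Nout (h₁.subset (mem_Nout_self E y)) hzy.symm)
  · exact .of_rel (adj_of_mem_Nout
      (h₁.subset ⟨mem_Nout_of_adj hxy, mem_Nout_self E y⟩).2 hzy.symm)

lemma NCond.symmGen_left (hxy : E x y) (h : NCond (Nin E) x y z) : SymmGen E x z := by
  have hzx := h.ne.1
  rcases h with ⟨h₁, -⟩ | ⟨-, h₂⟩ | ⟨h₁, -⟩
  · exact .of_rel (adj_of_mem_Nin (h₁.subset (mem_Nin_self E x)) hzx.symm)
  · exact .of_rel_symm (adj_of_mem_Nin (h₂.subset (mem_Nin_self E z)) hzx)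
  · exact .of_rel (adj_of_mem_Nin
      (h₁.subset ⟨mem_Nin_self E x, mem_Nin_of_adj hxy⟩).2 hzx.symm)

noncomputable def overlapKey (S T : Set V) : ℕ ×ₗ ℕ := toLex ((S ∩ T)ᶜ.ncard, (S ∪ T).ncard)

lemma overlapKey_comm (S T : Set V) : overlapKey S T = overlapKey T S := by
  rw [overlapKey, overlapKey, Set.inter_comm, Set.union_comm]

noncomputable def arcKey (E : V → V → Prop) (x y : V) : ℕ ×ₗ ℕ :=
  overlapKey (Nout E x) (Nout E y) + overlapKey (Nin E x) (Nin E y)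

lemma arcKey_comm (E : V → V → Prop) (x y : V) : arcKey E x y = arcKey E y x := by
  rw [arcKey, arcKey, overlapKey_comm (Nout E x), overlapKey_comm (Nin E x)]

def Splits (E : V → V → Prop) (x y z : V) : Prop :=
  SymmGen E x z ∧ SymmGen E z y ∧ arcKey E x z < arcKey E x y ∧ arcKey E z y < arcKey E x y

section Finite

variable [Finite V] {S T S' T' U W U' W' : Set V}

lemma overlapKey_lt_of_inter_ssubset (h : S ∩ T ⊂ S' ∩ T') : overlapKey S' T' < overlapKey S T :=
  Prod.Lex.toLex_lt_toLex.2 <| .inl <| Set.ncard_lt_ncard <| compl_lt_compl_iff_lt.2 h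

lemma overlapKey_lt_of_inter_eq (hi : S ∩ T = S' ∩ T') (hu : S' ∪ T' ⊂ S ∪ T) :
    overlapKey S' T' < overlapKey S T :=
  Prod.Lex.toLex_lt_toLex.2 <| .inr ⟨by rw [hi], Set.ncard_lt_ncard hu⟩

lemma overlapKey_le (hi : S ∩ T ⊆ S' ∩ T') (hu : S' ∪ T' ⊆ S ∪ T) :
    overlapKey S' T' ≤ overlapKey S T := by
  obtain hi | hi := hi.ssubset_or_eq
  · exact (overlapKey_lt_of_inter_ssubset hi).le
  obtain hu | hu := hu.ssubset_or_eq
  · exact (overlapKey_lt_of_inter_eq hi hu).le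
  · rw [overlapKey, overlapKey, hi, hu]

lemma overlapKey_add_lt (h₁ : S ∩ T ⊂ S' ∩ T') (h₂ : U ∩ W ⊆ U' ∩ W') :
    overlapKey S' T' + overlapKey U' W' < overlapKey S T + overlapKey U W := by
  have h₁ := Set.ncard_lt_ncard (compl_lt_compl_iff_lt.2 h₁)
  have h₂ := Set.ncard_le_ncard (Set.compl_subset_compl.2 h₂)
  exact Prod.Lex.lt_iff.2 (.inl (Nat.add_lt_add_of_lt_of_le h₁ h₂))

lemma overlapKey_self_lt (h : S ≠ T) : overlapKey S S < overlapKey S T := by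
  by_cases hST : S ⊆ T
  · refine overlapKey_lt_of_inter_eq (by simp [hST]) ?_
    rw [Set.union_self, Set.union_eq_right.2 hST]
    exact hST.ssubset_of_ne h
  · refine overlapKey_lt_of_inter_ssubset ?_
    rw [Set.inter_self]
    exact Set.inter_subset_left.ssubset_of_ne (mt Set.inter_eq_left.1 hST)

lemma overlapKey_le_of_eq_or_eq (h : U = S ∨ U = T) :
    overlapKey S U ≤ overlapKey S T ∧ overlapKey U T ≤ overlapKey S T := by
  rcases h with rfl | rfl
  · refine ⟨overlapKey_le ?_ ?_, le_rfl⟩ <;> simp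
  · refine ⟨le_rfl, overlapKey_le ?_ ?_⟩ <;> simp

lemma NCond.overlapKey_lt (h : NCond A x y z) :
    overlapKey (A x) (A z) < overlapKey (A x) (A y) ∧
      overlapKey (A z) (A y) < overlapKey (A x) (A y) := by
  rcases h with ⟨h₁, h₂⟩ | ⟨h₁, h₂⟩ | ⟨h₁, h₂⟩
  · have hxy := h₁.subset.trans h₂.subset
    refine ⟨overlapKey_lt_of_inter_eq ?_ ?_, overlapKey_lt_of_inter_ssubset ?_⟩
    · rw [Set.inter_eq_left.2 hxy, Set.inter_eq_left.2 h₁.subset]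
    · rwa [Set.union_eq_right.2 hxy, Set.union_eq_right.2 h₁.subset]
    · rwa [Set.inter_eq_left.2 hxy, Set.inter_eq_left.2 h₂.subset]
  · have hyx := h₁.subset.trans h₂.subset
    refine ⟨overlapKey_lt_of_inter_ssubset ?_, overlapKey_lt_of_inter_eq ?_ ?_⟩
    · rwa [Set.inter_eq_right.2 hyx, Set.inter_eq_right.2 h₂.subset]
    · rw [Set.inter_eq_right.2 hyx, Set.inter_eq_right.2 h₁.subset]
    · rwa [Set.union_eq_left.2 hyx, Set.union_eq_left.2 h₁.subset]
  · refine ⟨overlapKey_lt_of_inter_ssubset h₁, overlapKey_lt_of_inter_ssubset ?_⟩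
    rwa [Set.inter_comm (A z)]

lemma D1.exists_splits (hxy : E x y) (h : D1 E x y) : ∃ z, Splits E x y z := by
  obtain ⟨z, hout, hin⟩ := h
  exact ⟨z, hin.symmGen_left hxy, hout.symmGen_right hxy,
    add_lt_add hout.overlapKey_lt.1 hin.overlapKey_lt.1,
    add_lt_add hout.overlapKey_lt.2 hin.overlapKey_lt.2⟩

lemma D2.exists_splits (hxy : E x y) (h : D2 E x y) : ∃ z, Splits E x y z := by
  obtain ⟨z, -, ⟨h₃, hw⟩, -⟩ := h
  have hout : NCond (Nout E) x y z := .inr (.inr h₃)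
  have hxz := adj_of_mem_Nin (hw.1 ⟨mem_Nin_self E x, mem_Nin_of_adj hxy⟩).2 hout.ne.1.symm
  refine ⟨z, .of_rel hxz, hout.symmGen_right hxy, overlapKey_add_lt h₃.1 hw.1, ?_⟩
  rw [arcKey, overlapKey_comm (Nout E z), overlapKey_comm (Nin E z)]
  exact overlapKey_add_lt h₃.2 hw.2

lemma D3.exists_splits (hxy : E x y) (h : D3 E x y) : ∃ z, Splits E x y z := by
  obtain ⟨z, hout, heq⟩ := h
  have hxz : x ∈ Nin E z := by
    rcases heq with h | h <;> rw [← h]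
    exacts [mem_Nin_self E x, mem_Nin_of_adj hxy]
  have hin := overlapKey_le_of_eq_or_eq (heq.imp Eq.symm Eq.symm)
  exact ⟨z, .of_rel (adj_of_mem_Nin hxz hout.ne.1.symm), hout.symmGen_right hxy,
    add_lt_add_of_lt_of_le hout.overlapKey_lt.1 hin.1,
    add_lt_add_of_lt_of_le hout.overlapKey_lt.2 hin.2⟩

lemma D4.exists_splits (hxy : E x y) (h : D4 E x y) : ∃ z, Splits E x y z := by
  obtain ⟨z, hin, heq⟩ := h
  have hyz : y ∈ Nout E z := by
    rcases heq with h | h <;> rw [← h]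
    exacts [mem_Nout_of_adj hxy, mem_Nout_self E y]
  have hout := overlapKey_le_of_eq_or_eq (heq.imp Eq.symm Eq.symm)
  exact ⟨z, hin.symmGen_left hxy, .of_rel (adj_of_mem_Nout hyz hin.ne.2.symm),
    add_lt_add_of_le_of_lt hout.1 hin.overlapKey_lt.1,
    add_lt_add_of_le_of_lt hout.2 hin.overlapKey_lt.2⟩

lemma D5.exists_splits (hthin : Thin E) (hxy : E x y) (h : D5 E x y) : ∃ z, Splits E x y z := by
  obtain ⟨z, -, -, hzx, hzy, -, -, hout, -, hin, -⟩ := h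
  have hout_ne : Nout E x ≠ Nout E y := fun h => hzy (hthin z y (hout.symm.trans h) hin)
  have hin_ne : Nin E x ≠ Nin E y := fun h => hzx (hthin z x hout.symm (hin.trans h.symm))
  refine ⟨z, .of_rel (adj_of_mem_Nin (hin ▸ mem_Nin_of_adj hxy) hzx.symm),
    .of_rel (adj_of_mem_Nout (hout ▸ mem_Nout_of_adj hxy) hzy.symm), ?_, ?_⟩
  · rw [arcKey, arcKey, ← hout, hin]
    exact add_lt_add_of_lt_of_le (overlapKey_self_lt hout_ne) le_rfl
  · rw [arcKey, arcKey, ← hout, hin, overlapKey_comm (Nin E x)]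
    exact add_lt_add_right (overlapKey_self_lt hin_ne.symm) _

lemma Dispensable.exists_splits (hthin : Thin E) (hxy : E x y) (h : Dispensable E x y) :
    ∃ z, Splits E x y z := by
  rcases h with h | h | h | h | h
  exacts [h.exists_splits hxy, h.exists_splits hxy, h.exists_splits hxy, h.exists_splits hxy,
    h.exists_splits hthin hxy]

theorem Thin.reflTransGen_symmGen_skelAdj (hthin : Thin E) {x y : V} (h : SymmGen E x y) :
    ReflTransGen (SymmGen (SkelAdj E)) x y := by
  generalize hk : arcKey E x y = k
  induction k using WellFoundedLT.induction generalizing x y with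
  | ind k ih =>
  wlog hxy : E x y generalizing x y
  · exact symm (this h.symm (arcKey_comm E y x ▸ hk) (h.resolve_left hxy))
  subst hk
  by_cases hd : Dispensable E x y
  · obtain ⟨z, hxz, hzy, hkxz, hkzy⟩ := hd.exists_splits hthin hxy
    exact (ih _ hkxz hxz rfl).trans (ih _ hkzy hzy rfl)
  · exact .single (.of_rel ⟨hxy, hd⟩)

end Finite

end

theorem skeleton_connected_general {V : Type*} [Fintype V]
    (E : V → V → Prop) (hthin : Thin E)
    (hconn : ∀ x y : V, Relation.ReflTransGen (fun a b => E a b ∨ E b a) x y) :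
    ∀ x y : V, Relation.ReflTransGen (fun a b => SkelAdj E a b ∨ SkelAdj E b a) x y :=
  fun x y => reflTransGen_closed (fun _ _ => hthin.reflTransGen_symmGen_skelAdj) x y (hconn x y)

/-- If `G` is a thin connected finite digraph, then its Cartesian skeleton `𝕊(G)` is
connected: any two vertices are joined by a walk in the underlying undirected graph
of `𝕊(G)`. -/
theorem skeleton_connected {V : Type*} [Fintype V]
    (E : V → V → Prop) (hirr : Irreflexive E) (hthin : Thin E)
    (hconn : ∀ x y : V, Relation.ReflTransGen (fun a b => E a b ∨ E b a) x y) :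
    ∀ x y : V, Relation.ReflTransGen (fun a b => SkelAdj E a b ∨ SkelAdj E b a) x y :=
  skeleton_connected_general E hthin hconn
end

section
/- Any isomorphism φ: G → H of digraphs, viewed as a map on vertex sets, is also an isomorphism of Cartesian skeletons φ: 𝕊(G) → 𝕊(H); equivalently, for every arc xy ∈ E(G), xy is dispensable in G if and only if φ(x)φ(y) is dispensable in H. -/
section Aux
variable {A B : Type*} (φ : A ≃ B)

lemma ssub_image {s t : Set A} : φ '' s ⊂ φ '' t ↔ s ⊂ t := by
  simp [Set.ssubset_def, Set.image_subset_image_iff φ.injective]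

lemma eq_image {s t : Set A} : φ '' s = φ '' t ↔ s = t :=
  Set.image_eq_image φ.injective

lemma NCond3_image {N : A → Set A} {M : B → Set B}
    (h : ∀ v, M (φ v) = φ '' N v) (x y z : A) :
    NCond3 M (φ x) (φ y) (φ z) ↔ NCond3 N x y z := by
  simp only [NCond3, h, ← Set.image_inter φ.injective, ssub_image]

lemma NCond_image {N : A → Set A} {M : B → Set B}
    (h : ∀ v, M (φ v) = φ '' N v) (x y z : A) :
    NCond M (φ x) (φ y) (φ z) ↔ NCond N x y z := by
  simp only [NCond, h, ssub_image, NCond3_image φ h]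

lemma Weak_image {N : A → Set A} {M : B → Set B}
    (h : ∀ v, M (φ v) = φ '' N v) (x y z : A) :
    WeakNCond M (φ x) (φ y) (φ z) ↔ WeakNCond N x y z := by
  simp only [WeakNCond, h, ← Set.image_inter φ.injective,
    Set.image_subset_image_iff φ.injective]

lemma Eqn_image {N : A → Set A} {M : B → Set B}
    (h : ∀ v, M (φ v) = φ '' N v) (x y : A) :
    M (φ x) = M (φ y) ↔ N x = N y := by
  rw [h, h, eq_image]

end Aux

/-- Any isomorphism `φ : G → H` of digraphs is also an isomorphism of the Cartesian
skeletons `𝕊(G) → 𝕊(H)`; equivalently, an arc `xy` of `G` is dispensable in `G` iff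
`φ(x)φ(y)` is dispensable in `H`. -/
theorem skeleton_iso_of_iso {A B : Type*} (E : A → A → Prop) (F : B → B → Prop)
    (hirrE : Irreflexive E) (hirrF : Irreflexive F)
    (φ : A ≃ B) (hφ : ∀ x y : A, E x y ↔ F (φ x) (φ y)) :
    (∀ x y : A, SkelAdj E x y ↔ SkelAdj F (φ x) (φ y)) ∧
    (∀ x y : A, E x y → (Dispensable E x y ↔ Dispensable F (φ x) (φ y))) := by
  have hNout : ∀ v, Nout F (φ v) = φ '' Nout E v := by
    intro v; ext b
    obtain ⟨a, rfl⟩ := φ.surjective b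
    simp [Nout, φ.injective.eq_iff, hφ, Set.mem_image]
  have hNin : ∀ v, Nin F (φ v) = φ '' Nin E v := by
    intro v; ext b
    obtain ⟨a, rfl⟩ := φ.surjective b
    simp [Nin, φ.injective.eq_iff, hφ, Set.mem_image]
  have hD : ∀ x y : A, Dispensable E x y ↔ Dispensable F (φ x) (φ y) := by
    intro x y
    simp only [Dispensable, D1, D2, D3, D4, D5, φ.surjective.exists,
      NCond_image φ hNout, NCond_image φ hNin, NCond3_image φ hNout,
      NCond3_image φ hNin, Weak_image φ hNout, Weak_image φ hNin,
      Eqn_image φ hNout, Eqn_image φ hNin, φ.injective.ne_iff]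
  exact ⟨fun x y => by simp only [SkelAdj, hφ x y, hD x y], fun x y _ => hD x y⟩
end
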